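/- Let p ≠ 3 be a prime and let η_p : V(𝔽_p) → ℤ assign to a binary cubic form x over 𝔽_p the number of its roots in ℙ¹(𝔽_p). Then the finite Fourier transform of η_p on V(𝔽_p) ≅ 𝔽_p⁴ (with respect to the standard GL₂-invariant pairing [·,·]) satisfies: η̂_p(x) = 1 + p^{-1} if x = 0; η̂_p(x) = p^{-1} if x ≠ 0 and x has a triple root in ℙ¹(𝔽_p); and η̂_p(x) = 0 otherwise. -/

import Mathlib

/-- The space of binary cubic forms over `ℤ/pℤ`, via coefficient quadruples `(a, b, c, d)`
representing `a u³ + b u² v + c u v² + d v³`. -/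
abbrev VMod (p : ℕ) := ZMod p × ZMod p × ZMod p × ZMod p

/-- Evaluation of the binary cubic form `y` at `(u, v)`. -/
def evalCubic {p : ℕ} (y : VMod p) (u v : ZMod p) : ZMod p :=
  y.1 * u ^ 3 + y.2.1 * u ^ 2 * v + y.2.2.1 * u * v ^ 2 + y.2.2.2 * v ^ 3

/-- The standard `GL₂`-invariant pairing
`[x, y] = x₄y₁ - (1/3)x₃y₂ + (1/3)x₂y₃ - x₁y₄` on binary cubic forms over `ℤ/pℤ` (`p ≠ 3`). -/
def pairCubic {p : ℕ} (x y : VMod p) : ZMod p :=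
  x.2.2.2 * y.1 - (3 : ZMod p)⁻¹ * x.2.2.1 * y.2.1 + (3 : ZMod p)⁻¹ * x.2.1 * y.2.2.1
    - x.1 * y.2.2.2

/-- The additive character `k ↦ e(k/p)` on `ℤ/pℤ`. -/
noncomputable def eChar (p : ℕ) (k : ZMod p) : ℂ :=
  Complex.exp (2 * Real.pi * Complex.I * (k.val : ℂ) / (p : ℂ))

/-- `η_p(y)`: the number of roots of the binary cubic form `y` in `ℙ¹(𝔽_p)`. -/
noncomputable def etaP (p : ℕ) [Fact p.Prime] (y : VMod p) : ℕ :=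
  Nat.card {ℓ : Projectivization (ZMod p) (ZMod p × ZMod p) //
    evalCubic y ℓ.rep.1 ℓ.rep.2 = 0}

/-- The finite Fourier transform `η̂_p(x) = p⁻⁴ ∑_y η_p(y) e([x,y]/p)`. -/
noncomputable def etaHat (p : ℕ) [Fact p.Prime] (x : VMod p) : ℂ :=
  ((p : ℂ)) ⁻¹ ^ 4 * ∑ y : VMod p, (etaP p y : ℂ) * eChar p (pairCubic x y)

/-- `x` has a triple root in `ℙ¹(𝔽_p)`: `x = c (t u - s v)³` for some `(s : t) ∈ ℙ¹` and
`c ≠ 0`. -/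
def HasTripleRoot {p : ℕ} (x : VMod p) : Prop :=
  ∃ c s t : ZMod p, (s, t) ≠ (0, 0) ∧ c ≠ 0 ∧
    x = (c * t ^ 3, -(3 * c * t ^ 2 * s), 3 * c * t * s ^ 2, -(c * s ^ 3))

/-
The indicator of `y(s, t) = 0` is `p⁻¹ ∑ₖ e(k y(s, t) / p)`, and evaluating `y` at `(s : t)` is
(up to sign, and since `3` is invertible) pairing `y` with the cube `(t u - s v)³` of the linear
form vanishing at `(s : t)`. Orthogonality of characters on `V(𝔽_p)` therefore turns `η̂_p(x)`
into `p⁻¹` times the number of ways of writing `x = k (t u - s v)³` with `(s : t) ∈ ℙ¹` and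
`k ∈ 𝔽_p`. For `x = 0` these are the `p + 1` choices of `(s : t)` with `k = 0`; a nonzero `x` has
at most one such representation, and it has one exactly when it has a triple root.
-/

open Projectivization Finset
open scoped LinearAlgebra.Projectivization

theorem AddChar.sum_comp_linearMap_eq_zero {F V R : Type*} [Field F] [AddCommGroup V]
    [Module F V] [Fintype V] [CommRing R] [IsDomain R] {ψ : AddChar F R} (hψ : ψ.IsPrimitive)
    {L : V →ₗ[F] F} (hL : L ≠ 0) : ∑ v, ψ (L v) = 0 := by
  obtain ⟨v, hv⟩ : ∃ v, L v ≠ 0 := by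
    by_contra! h
    exact hL (LinearMap.ext h)
  refine AddChar.sum_eq_zero_of_ne_one (ψ := ψ.compAddMonoidHom L.toAddMonoidHom) fun h => ?_
  refine hψ hv (DFunLike.ext _ _ fun c => ?_)
  simpa [mul_comm] using DFunLike.congr_fun h (c • v)

theorem Projectivization.mk_eq_mk_of_mul_eq_mul {K : Type*} [Field K] {v w : K × K}
    (hv : v ≠ 0) (hw : w ≠ 0) (h : v.1 * w.2 = v.2 * w.1) : mk K v hv = mk K w hw := by
  rw [mk_eq_mk_iff']
  by_cases hw₁ : w.1 = 0
  · have hw₂ : w.2 ≠ 0 := fun hw₂ => hw (Prod.ext hw₁ hw₂)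
    have hv₁ : v.1 = 0 := by simpa [hw₁, hw₂] using h
    exact ⟨v.2 / w.2, Prod.ext (by simp [hw₁, hv₁]) (by simp [hw₂])⟩
  · refine ⟨v.1 / w.1, Prod.ext (by simp [hw₁]) ?_⟩
    simp only [Prod.smul_snd, smul_eq_mul]
    field_simp
    linear_combination h

section Characters

variable (p : ℕ) [NeZero p]

theorem eChar_eq_stdAddChar : eChar p = ⇑(ZMod.stdAddChar : AddChar (ZMod p) ℂ) := by
  ext k
  rw [eChar, ZMod.stdAddChar_apply, ZMod.toCircle_apply]

theorem eChar_add (a b : ZMod p) : eChar p (a + b) = eChar p a * eChar p b := by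
  rw [eChar_eq_stdAddChar]
  exact AddChar.map_add_eq_mul _ a b

theorem sum_eChar_mul (a : ZMod p) :
    ∑ k, eChar p (k * a) = if a = 0 then (p : ℂ) else 0 := by
  rw [eChar_eq_stdAddChar, AddChar.sum_mulShift a (ZMod.isPrimitive_stdAddChar p), ZMod.card]
  push_cast
  rfl

end Characters

section Pairing

variable {p : ℕ}

def pairCubicBilin (p : ℕ) : LinearMap.BilinForm (ZMod p) (VMod p) :=
  LinearMap.mk₂ (ZMod p) pairCubic
    (fun _ _ _ => by simp only [pairCubic, Prod.fst_add, Prod.snd_add]; ring)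
    (fun _ _ _ => by simp only [pairCubic, Prod.smul_fst, Prod.smul_snd, smul_eq_mul]; ring)
    (fun _ _ _ => by simp only [pairCubic, Prod.fst_add, Prod.snd_add]; ring)
    (fun _ _ _ => by simp only [pairCubic, Prod.smul_fst, Prod.smul_snd, smul_eq_mul]; ring)

theorem pairCubicBilin_apply (x y : VMod p) : pairCubicBilin p x y = pairCubic x y := rfl

variable [Fact p.Prime]

theorem pairCubicBilin_ne_zero (h3 : (3 : ZMod p) ≠ 0) {x : VMod p} (hx : x ≠ 0) :
    pairCubicBilin p x ≠ 0 := by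
  intro h
  have hy (y : VMod p) : pairCubic x y = 0 := LinearMap.congr_fun h y
  have e₁ : x.2.2.2 = 0 := by simpa [pairCubic] using hy (1, 0, 0, 0)
  have e₂ : x.2.2.1 = 0 := by simpa [pairCubic, h3] using hy (0, 1, 0, 0)
  have e₃ : x.2.1 = 0 := by simpa [pairCubic, h3] using hy (0, 0, 1, 0)
  have e₄ : x.1 = 0 := by simpa [pairCubic] using hy (0, 0, 0, 1)
  exact hx (Prod.ext e₄ (Prod.ext e₃ (Prod.ext e₂ e₁)))

theorem sum_eChar_pairCubic (h3 : (3 : ZMod p) ≠ 0) (x : VMod p) :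
    ∑ y, eChar p (pairCubic x y) = if x = 0 then (p : ℂ) ^ 4 else 0 := by
  split_ifs with hx
  · simp [hx, pairCubic, eChar_eq_stdAddChar, ZMod.card, pow_succ, mul_assoc]
  · rw [eChar_eq_stdAddChar]
    simpa only [pairCubicBilin_apply] using AddChar.sum_comp_linearMap_eq_zero
      (ZMod.isPrimitive_stdAddChar p) (pairCubicBilin_ne_zero h3 hx)

end Pairing

section CubeForm

variable {p : ℕ}

def cubeForm (k s t : ZMod p) : VMod p :=
  (k * t ^ 3, -(3 * k * t ^ 2 * s), 3 * k * t * s ^ 2, -(k * s ^ 3))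

theorem evalCubic_cubeForm (k s t u v : ZMod p) :
    evalCubic (cubeForm k s t) u v = k * (t * u - s * v) ^ 3 := by
  simp only [evalCubic, cubeForm]
  ring

theorem cubeForm_zero_left (s t : ZMod p) : cubeForm 0 s t = 0 := by
  simp [cubeForm]

theorem cubeForm_mul_mul (k a s t : ZMod p) :
    cubeForm k (a * s) (a * t) = cubeForm (k * a ^ 3) s t := by
  simp only [cubeForm, Prod.mk.injEq]
  refine ⟨by ring, by ring, by ring, by ring⟩

variable [Fact p.Prime]

theorem pairCubic_cubeForm (h3 : (3 : ZMod p) ≠ 0) (k s t : ZMod p) (y : VMod p) :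
    pairCubic (cubeForm k s t) y = -(k * evalCubic y s t) := by
  have h33 : (3 : ZMod p)⁻¹ * 3 = 1 := inv_mul_cancel₀ h3
  simp only [pairCubic, cubeForm, evalCubic]
  linear_combination (-(k * t * s ^ 2 * y.2.1) - k * t ^ 2 * s * y.2.2.1) * h33

theorem pairCubic_sub_cubeForm (h3 : (3 : ZMod p) ≠ 0) (x y : VMod p) (k s t : ZMod p) :
    pairCubic (x - cubeForm k s t) y = k * evalCubic y s t + pairCubic x y := by
  rw [← pairCubicBilin_apply, map_sub, LinearMap.sub_apply, pairCubicBilin_apply,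
    pairCubicBilin_apply, pairCubic_cubeForm h3]
  ring

theorem cubeForm_left_injective {v : ZMod p × ZMod p} (hv : v ≠ 0) :
    Function.Injective fun k => cubeForm k v.1 v.2 := by
  intro k k' h
  simp only [cubeForm, Prod.mk.injEq, neg_inj] at h
  by_cases ht : v.2 = 0
  · have hs : v.1 ≠ 0 := fun hs => hv (Prod.ext hs ht)
    exact mul_right_cancel₀ (pow_ne_zero 3 hs) h.2.2.2
  · exact mul_right_cancel₀ (pow_ne_zero 3 ht) h.1

theorem mk_eq_mk_of_cubeForm_eq {k k' : ZMod p} (hk : k ≠ 0) {v w : ZMod p × ZMod p}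
    (hv : v ≠ 0) (hw : w ≠ 0) (h : cubeForm k v.1 v.2 = cubeForm k' w.1 w.2) :
    mk (ZMod p) v hv = mk (ZMod p) w hw := by
  have hw_root := congrArg (fun x => evalCubic x w.1 w.2) h
  simp only [evalCubic_cubeForm, mul_comm w.2 w.1, sub_self, zero_pow three_ne_zero, mul_zero,
    mul_eq_zero, hk, false_or, pow_eq_zero_iff three_ne_zero, sub_eq_zero] at hw_root
  exact mk_eq_mk_of_mul_eq_mul hv hw (by linear_combination -hw_root)

end CubeForm

section Count

variable {p : ℕ} [Fact p.Prime]

noncomputable local instance : Fintype (ℙ (ZMod p) (ZMod p × ZMod p)) := Fintype.ofFinite _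

noncomputable def cubeReps (x : VMod p) : Finset (ℙ (ZMod p) (ZMod p × ZMod p) × ZMod p) :=
  {q | x = cubeForm q.2 q.1.rep.1 q.1.rep.2}

theorem card_cubeReps_zero : #(cubeReps (0 : VMod p)) = p + 1 := by
  have hreps : cubeReps (0 : VMod p) = univ ×ˢ {0} := by
    ext ⟨ℓ, k⟩
    rw [cubeReps, mem_filter, eq_comm, ← cubeForm_zero_left ℓ.rep.1 ℓ.rep.2,
      (cubeForm_left_injective ℓ.rep_nonzero).eq_iff]
    simp [eq_comm]
  have hrank : Module.finrank (ZMod p) (ZMod p × ZMod p) = 2 := by simp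
  rw [hreps, card_product, card_singleton, mul_one, card_univ, Fintype.card_eq_nat_card,
    card_of_finrank_two _ _ hrank, Nat.card_zmod]

theorem card_cubeReps_le_one {x : VMod p} (hx : x ≠ 0) : #(cubeReps x) ≤ 1 := by
  refine card_le_one.2 fun ⟨ℓ, k⟩ hq ⟨ℓ', k'⟩ hq' => ?_
  simp only [cubeReps, mem_filter, mem_univ, true_and] at hq hq'
  have hk : k ≠ 0 := by
    rintro rfl
    exact hx (hq.trans (cubeForm_zero_left _ _))
  obtain rfl : ℓ = ℓ' := by
    simpa using mk_eq_mk_of_cubeForm_eq hk ℓ.rep_nonzero ℓ'.rep_nonzero (hq.symm.trans hq')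
  rw [cubeForm_left_injective ℓ.rep_nonzero (hq.symm.trans hq')]

theorem cubeReps_nonempty_iff {x : VMod p} (hx : x ≠ 0) :
    (cubeReps x).Nonempty ↔ HasTripleRoot x := by
  constructor
  · rintro ⟨⟨ℓ, k⟩, hq⟩
    simp only [cubeReps, mem_filter, mem_univ, true_and] at hq
    refine ⟨k, ℓ.rep.1, ℓ.rep.2, ℓ.rep_nonzero, ?_, hq⟩
    rintro rfl
    exact hx (hq.trans (cubeForm_zero_left _ _))
  · rintro ⟨c, s, t, hst, -, hx⟩
    obtain ⟨a, ha⟩ := exists_smul_eq_mk_rep (ZMod p) (s, t) hst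
    refine ⟨(mk _ (s, t) hst, c * ((a⁻¹ : (ZMod p)ˣ) : ZMod p) ^ 3), ?_⟩
    simp only [cubeReps, mem_filter, mem_univ, true_and]
    rw [← ha]
    simp only [Prod.smul_fst, Prod.smul_snd, Units.smul_def, smul_eq_mul, cubeForm_mul_mul]
    rwa [mul_assoc, ← mul_pow, Units.inv_mul, one_pow, mul_one]

theorem sum_ite_evalCubic_mul_eChar (h3 : (3 : ZMod p) ≠ 0) (x : VMod p) (v : ZMod p × ZMod p) :
    ∑ y, (if evalCubic y v.1 v.2 = 0 then 1 else 0 : ℂ) * eChar p (pairCubic x y)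
      = (p : ℂ) ^ 3 * ∑ k, if x = cubeForm k v.1 v.2 then 1 else 0 := by
  have hp : (p : ℂ) ≠ 0 := by exact_mod_cast (Fact.out : p.Prime).ne_zero
  calc ∑ y, (if evalCubic y v.1 v.2 = 0 then 1 else 0 : ℂ) * eChar p (pairCubic x y)
      = (p : ℂ)⁻¹ * ∑ y, ∑ k, eChar p (k * evalCubic y v.1 v.2) * eChar p (pairCubic x y) := by
        rw [mul_sum]
        refine sum_congr rfl fun y _ => ?_
        rw [← sum_mul, sum_eChar_mul]
        split_ifs <;> simp [hp]
    _ = (p : ℂ)⁻¹ * ∑ k, ∑ y, eChar p (pairCubic (x - cubeForm k v.1 v.2) y) := by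
        simp_rw [pairCubic_sub_cubeForm h3, eChar_add]
        rw [sum_comm]
    _ = (p : ℂ) ^ 3 * ∑ k, if x = cubeForm k v.1 v.2 then 1 else 0 := by
        simp_rw [sum_eChar_pairCubic h3, sub_eq_zero, mul_sum]
        refine sum_congr rfl fun k _ => ?_
        split_ifs
        · field_simp
        · simp

theorem etaP_eq_sum (y : VMod p) :
    (etaP p y : ℂ) = ∑ ℓ : ℙ (ZMod p) (ZMod p × ZMod p),
      if evalCubic y ℓ.rep.1 ℓ.rep.2 = 0 then 1 else 0 := by
  rw [etaP, Nat.card_eq_fintype_card, Fintype.card_subtype, card_filter]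
  push_cast
  rfl

theorem etaHat_eq_card_cubeReps (h3 : (3 : ZMod p) ≠ 0) (x : VMod p) :
    etaHat p x = (p : ℂ)⁻¹ * #(cubeReps x) := by
  have hp : (p : ℂ) ≠ 0 := by exact_mod_cast (Fact.out : p.Prime).ne_zero
  have hcard : (#(cubeReps x) : ℂ) = ∑ ℓ : ℙ (ZMod p) (ZMod p × ZMod p),
      ∑ k, if x = cubeForm k ℓ.rep.1 ℓ.rep.2 then 1 else 0 := by
    rw [cubeReps, card_filter, ← Fintype.sum_prod_type']
    push_cast
    rfl
  simp_rw [etaHat, etaP_eq_sum, sum_mul]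
  rw [sum_comm]
  simp_rw [sum_ite_evalCubic_mul_eChar h3, ← mul_sum, hcard]
  field_simp

end Count

/-- Mori's evaluation of the Fourier transform of the root-counting function `η_p` on the
space of binary cubic forms over `𝔽_p`, for a prime `p ≠ 3`:
`η̂_p(x) = 1 + 1/p` for `x = 0`, `η̂_p(x) = 1/p` if `x ≠ 0` has a triple root, and
`η̂_p(x) = 0` otherwise. -/
theorem etaHat_eval (p : ℕ) [Fact p.Prime] (hp : p ≠ 3) (x : VMod p) :
    (x = 0 → etaHat p x = 1 + (p : ℂ)⁻¹) ∧
    (x ≠ 0 → HasTripleRoot x → etaHat p x = (p : ℂ)⁻¹) ∧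
    (x ≠ 0 → ¬ HasTripleRoot x → etaHat p x = 0) := by
  have h3 : (3 : ZMod p) ≠ 0 := by exact_mod_cast ZMod.prime_ne_zero p 3 hp
  refine ⟨?_, fun hx htr => ?_, fun hx htr => ?_⟩
  · rintro rfl
    have hp0 : (p : ℂ) ≠ 0 := by exact_mod_cast (Fact.out : p.Prime).ne_zero
    rw [etaHat_eq_card_cubeReps h3, card_cubeReps_zero]
    push_cast
    field_simp
  · have hcard : #(cubeReps x) = 1 := le_antisymm (card_cubeReps_le_one hx)
      (card_pos.2 ((cubeReps_nonempty_iff hx).2 htr))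
    rw [etaHat_eq_card_cubeReps h3, hcard, Nat.cast_one, mul_one]
  · have hempty : cubeReps x = ∅ :=
      not_nonempty_iff_eq_empty.1 (mt (cubeReps_nonempty_iff hx).1 htr)
    rw [etaHat_eq_card_cubeReps h3, hempty, card_empty, Nat.cast_zero, mul_zero]
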